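/- arXiv:math/0302299 — 6 statements merged into one kernel-verified Lean document; each statement's English description precedes it below -/
import Mathlib

section
/- Let α, β ∈ ℝ, write w(x,t) = αt − βx, and let z = (u,p,q) : ℝ × ℝ → ℝ³ be differentiable. Define the 3×3 matrix fields M(x,t) with entries M₁₂ = e^{w}, M₂₁ = −e^{w} and all other entries 0, and K(x,t) with entries K₁₃ = −e^{w}, K₃₁ = e^{w} and all other entries 0; define F(u,p,q,x,t) = (−½ e^{w} p, ½ e^{w} u, 0), G(u,p,q,x,t) = (½ e^{w} q, 0, −½ e^{w} u), and B(u,p,q,x,t) = −½ e^{w}(u² + p² − q² + α u p + β u q). Then z satisfies the multi-symplectic Birkhoff equation M(x,t) z_t + K(x,t) z_x = ∇_z B(z,x,t) + (∂F/∂t)(z,x,t) + (∂G/∂x)(z,x,t) at a point (x,t) (where ∂F/∂t and ∂G/∂x are partial derivatives in the explicit t and x arguments with z held fixed, and ∇_z B is the gradient of B in the z = (u,p,q) arguments) if and only if at that point u_t = p, u_x = q, and p_t − q_x + u + α p + β q = 0. -/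
open Real Matrix

/-! Componentwise, the Birkhoff equation minus its right-hand side is `e^{w}` times the
residual of the damped string system: `e^{w}(p_t − q_x + u + α p + β q)` for `μ = 0`,
`−e^{w}(u_t − p)` for `μ = 1` and `e^{w}(u_x − q)` for `μ = 2`. Since `e^{w} ≠ 0`, the two
systems agree. -/

theorem eq_iff_eq_of_sub_eq_mul_sub {R : Type*} [Ring R] [NoZeroDivisors R] {a b c d e : R}
    (he : e ≠ 0) (h : a - b = e * (c - d)) : a = b ↔ c = d := by
  rw [← sub_eq_zero, h, mul_eq_zero, sub_eq_zero, or_iff_right he]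

theorem damped_string_birkhoff_iff_general
    (α β : ℝ) (u p q : ℝ × ℝ → ℝ)
    (x t : ℝ) :
    let w : ℝ → ℝ → ℝ := fun X T => α * T - β * X
    let M : ℝ → ℝ → Matrix (Fin 3) (Fin 3) ℝ := fun X T =>
      !![0, exp (w X T), 0; -exp (w X T), 0, 0; 0, 0, 0]
    let K : ℝ → ℝ → Matrix (Fin 3) (Fin 3) ℝ := fun X T =>
      !![0, 0, -exp (w X T); 0, 0, 0; exp (w X T), 0, 0]
    let F : (Fin 3 → ℝ) → ℝ → ℝ → Fin 3 → ℝ := fun Z X T =>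
      ![-(1 / 2) * exp (w X T) * Z 1, (1 / 2) * exp (w X T) * Z 0, 0]
    let G : (Fin 3 → ℝ) → ℝ → ℝ → Fin 3 → ℝ := fun Z X T =>
      ![(1 / 2) * exp (w X T) * Z 2, 0, -(1 / 2) * exp (w X T) * Z 0]
    let B : (Fin 3 → ℝ) → ℝ → ℝ → ℝ := fun Z X T =>
      -(1 / 2) * exp (w X T) *
        (Z 0 ^ 2 + Z 1 ^ 2 - Z 2 ^ 2 + α * Z 0 * Z 1 + β * Z 0 * Z 2)
    let z : ℝ × ℝ → Fin 3 → ℝ := fun P => ![u P, p P, q P]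
    let zt : Fin 3 → ℝ := fun μ => deriv (fun s => z (x, s) μ) t
    let zx : Fin 3 → ℝ := fun μ => deriv (fun s => z (s, t) μ) x
    ((∀ μ : Fin 3,
        (M x t *ᵥ zt) μ + (K x t *ᵥ zx) μ =
          deriv (fun s => B (Function.update (z (x, t)) μ s) x t) (z (x, t) μ)
            + deriv (fun s => F (z (x, t)) x s μ) t
            + deriv (fun s => G (z (x, t)) s t μ) x)
      ↔
      (deriv (fun s => u (x, s)) t = p (x, t) ∧
       deriv (fun s => u (s, t)) x = q (x, t) ∧
       deriv (fun s => p (x, s)) t - deriv (fun s => q (s, t)) x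
         + u (x, t) + α * p (x, t) + β * q (x, t) = 0)) := by
  intro w M K F G B z zt zx
  have hE : exp (w x t) ≠ 0 := exp_ne_zero _
  rw [Fin.forall_fin_succ, Fin.forall_fin_two, Fin.succ_zero_eq_one, Fin.succ_one_eq_two]
  refine .trans ?_ and_rotate
  refine and_congr (eq_iff_eq_of_sub_eq_mul_sub hE ?_)
    (and_congr (eq_iff_eq_of_sub_eq_mul_sub (neg_ne_zero.2 hE) ?_)
      (eq_iff_eq_of_sub_eq_mul_sub hE ?_)) <;>
  · simp (disch := fun_prop) only [mulVec, dotProduct, Fin.sum_univ_three, of_apply,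
      cons_val', cons_val_zero, cons_val_one, cons_val, cons_val_fin_one, Function.update_self,
      Function.update_apply, Fin.reduceEq, ↓reduceIte, deriv_const_mul_field,
      deriv_mul_const_field, deriv_fun_add, deriv_fun_sub, deriv_fun_pow, deriv_const_mul_id',
      deriv_id'', deriv_const', _root_.deriv_exp, M, w, zt, z, K, zx, B, F, G]
    ring

/-- With `w(x,t) = αt − βx`, the matrix fields `M`, `K`, the
one-form components `F`, `G` and the Birkhoffian `B` of the damped string
equation, a differentiable `z = (u,p,q) : ℝ × ℝ → ℝ³` satisfies the
multi-symplectic Birkhoff equation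
`M z_t + K z_x = ∇_z B + ∂F/∂t + ∂G/∂x` at a point `(x,t)` iff at that point
`u_t = p`, `u_x = q` and `p_t − q_x + u + α p + β q = 0`. -/
theorem damped_string_birkhoff_iff
    (α β : ℝ) (u p q : ℝ × ℝ → ℝ)
    (hu : Differentiable ℝ u) (hp : Differentiable ℝ p) (hq : Differentiable ℝ q)
    (x t : ℝ) :
    let w : ℝ → ℝ → ℝ := fun X T => α * T - β * X
    let M : ℝ → ℝ → Matrix (Fin 3) (Fin 3) ℝ := fun X T =>
      !![0, exp (w X T), 0; -exp (w X T), 0, 0; 0, 0, 0]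
    let K : ℝ → ℝ → Matrix (Fin 3) (Fin 3) ℝ := fun X T =>
      !![0, 0, -exp (w X T); 0, 0, 0; exp (w X T), 0, 0]
    let F : (Fin 3 → ℝ) → ℝ → ℝ → Fin 3 → ℝ := fun Z X T =>
      ![-(1 / 2) * exp (w X T) * Z 1, (1 / 2) * exp (w X T) * Z 0, 0]
    let G : (Fin 3 → ℝ) → ℝ → ℝ → Fin 3 → ℝ := fun Z X T =>
      ![(1 / 2) * exp (w X T) * Z 2, 0, -(1 / 2) * exp (w X T) * Z 0]
    let B : (Fin 3 → ℝ) → ℝ → ℝ → ℝ := fun Z X T =>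
      -(1 / 2) * exp (w X T) *
        (Z 0 ^ 2 + Z 1 ^ 2 - Z 2 ^ 2 + α * Z 0 * Z 1 + β * Z 0 * Z 2)
    let z : ℝ × ℝ → Fin 3 → ℝ := fun P => ![u P, p P, q P]
    let zt : Fin 3 → ℝ := fun μ => deriv (fun s => z (x, s) μ) t
    let zx : Fin 3 → ℝ := fun μ => deriv (fun s => z (s, t) μ) x
    ((∀ μ : Fin 3,
        (M x t *ᵥ zt) μ + (K x t *ᵥ zx) μ =
          deriv (fun s => B (Function.update (z (x, t)) μ s) x t) (z (x, t) μ)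
            + deriv (fun s => F (z (x, t)) x s μ) t
            + deriv (fun s => G (z (x, t)) s t μ) x)
      ↔
      (deriv (fun s => u (x, s)) t = p (x, t) ∧
       deriv (fun s => u (s, t)) x = q (x, t) ∧
       deriv (fun s => p (x, s)) t - deriv (fun s => q (s, t)) x
         + u (x, t) + α * p (x, t) + β * q (x, t) = 0)) :=
  damped_string_birkhoff_iff_general α β u p q x t
end

section
/- Let α, β ∈ ℝ and w(x,t) = αt − βx, and define F, G : ℝ³ × ℝ² → ℝ³ by F(u,p,q,x,t) = (−½ e^{w} p, ½ e^{w} u, 0) and G(u,p,q,x,t) = (½ e^{w} q, 0, −½ e^{w} u). Then for all (z,x,t) and all indices μ, ν ∈ {1,2,3}, ∂F_ν/∂z^μ − ∂F_μ/∂z^ν equals the (μ,ν) entry of the matrix M(x,t) with M₁₂ = e^{w}, M₂₁ = −e^{w} and all other entries 0, and ∂G_ν/∂z^μ − ∂G_μ/∂z^ν equals the (μ,ν) entry of the matrix K(x,t) with K₁₃ = −e^{w}, K₃₁ = e^{w} and all other entries 0. In particular, the first-order formulation of the damped string equation carries a Birkhoffian structure: its coefficient matrices M and K arise as z-curls of the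 one-form components F and G. -/
open Real

/-- With `w(x,t) = αt − βx` and
`F(u,p,q,x,t) = (−½e^w p, ½e^w u, 0)`, `G(u,p,q,x,t) = (½e^w q, 0, −½e^w u)`,
for all `(z,x,t)` and all indices `μ ν`, the z-curl `∂F_ν/∂z^μ − ∂F_μ/∂z^ν`
equals the `(μ,ν)` entry of `M(x,t)` (with `M₁₂ = e^w`, `M₂₁ = −e^w`, rest `0`)
and the z-curl of `G` equals the `(μ,ν)` entry of `K(x,t)` (with
`K₁₃ = −e^w`, `K₃₁ = e^w`, rest `0`): the coefficient matrices of the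
first-order damped string equation arise as z-curls of `F` and `G`. -/
theorem damped_string_curl_structure (α β : ℝ) :
    let w : ℝ → ℝ → ℝ := fun X T => α * T - β * X
    let F : (Fin 3 → ℝ) → ℝ → ℝ → Fin 3 → ℝ := fun Z X T =>
      ![-(1 / 2) * exp (w X T) * Z 1, (1 / 2) * exp (w X T) * Z 0, 0]
    let G : (Fin 3 → ℝ) → ℝ → ℝ → Fin 3 → ℝ := fun Z X T =>
      ![(1 / 2) * exp (w X T) * Z 2, 0, -(1 / 2) * exp (w X T) * Z 0]
    let M : ℝ → ℝ → Matrix (Fin 3) (Fin 3) ℝ := fun X T =>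
      !![0, exp (w X T), 0; -exp (w X T), 0, 0; 0, 0, 0]
    let K : ℝ → ℝ → Matrix (Fin 3) (Fin 3) ℝ := fun X T =>
      !![0, 0, -exp (w X T); 0, 0, 0; exp (w X T), 0, 0]
    ∀ (z : Fin 3 → ℝ) (x t : ℝ) (μ ν : Fin 3),
      (deriv (fun s => F (Function.update z μ s) x t ν) (z μ)
        - deriv (fun s => F (Function.update z ν s) x t μ) (z ν) = M x t μ ν) ∧
      (deriv (fun s => G (Function.update z μ s) x t ν) (z μ)
        - deriv (fun s => G (Function.update z ν s) x t μ) (z ν) = K x t μ ν) := by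
  intro w F G M K z x t μ ν
  fin_cases μ <;> fin_cases ν <;>
    constructor <;>
    · simp only [F, G, M, K, Function.update_apply, Matrix.cons_val_zero,
        Matrix.cons_val_one, Matrix.head_cons, Matrix.cons_val_two, Matrix.tail_cons,
        Fin.isValue, Matrix.of_apply, Matrix.cons_val', Matrix.empty_val',
        Matrix.cons_val_fin_one, Matrix.head_fin_const]
      have h : ∀ (c v : ℝ), deriv (fun s => c * s) v = c := by
        intro c v
        simpa using (hasDerivAt_id v).const_mul c |>.deriv
      norm_num [h, Fin.ext_iff, deriv_const]
      try ring
end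

section
/- Let n ≥ 1 and let M, K : ℝ² → ℝ^{n×n} be continuously differentiable matrix fields (arguments (x,t)) such that M(x,t) and K(x,t) are skew-symmetric for every (x,t). Let C : ℝ² → ℝ^{n×n} be a matrix field satisfying C(x,t)ᵀ − C(x,t) = (∂M/∂t)(x,t) + (∂K/∂x)(x,t) for all (x,t). If U, V : ℝ² → ℝⁿ are differentiable and satisfy M U_t + K U_x = C U and M V_t + K V_x = C V at every point, then the multi-symplectic dissipation law holds: ∂/∂t ⟨M U, V⟩ + ∂/∂x ⟨K U, V⟩ = 0 at every point, where ⟨·,·⟩ is the standard inner product on ℝⁿ. -/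
/-! By the product rule, `∂ₜ⟨MU, V⟩ + ∂ₓ⟨KU, V⟩` expands to
`⟨(Mₜ + Kₓ)U, V⟩ + ⟨MUₜ + KUₓ, V⟩ + ⟨MU, Vₜ⟩ + ⟨KU, Vₓ⟩`. Skew-symmetry turns the last two terms
into `-⟨MVₜ + KVₓ, U⟩ = -⟨CᵀU, V⟩`, the equation for `U` turns the second into `⟨CU, V⟩`, and the
hypothesis on `C` turns the first into `⟨(Cᵀ - C)U, V⟩`; the three cancel. -/

open Matrix

theorem HasDerivAt.mulVec_dotProduct {𝕜 : Type*} [NontriviallyNormedField 𝕜]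
    {m n : Type*} [Fintype m] [Fintype n]
    {A : 𝕜 → Matrix m n 𝕜} {u : 𝕜 → n → 𝕜} {v : 𝕜 → m → 𝕜}
    {A' : Matrix m n 𝕜} {u' : n → 𝕜} {v' : m → 𝕜} {t : 𝕜}
    (hA : ∀ i j, HasDerivAt (fun s => A s i j) (A' i j) t)
    (hu : ∀ j, HasDerivAt (fun s => u s j) (u' j) t)
    (hv : ∀ i, HasDerivAt (fun s => v s i) (v' i) t) :
    HasDerivAt (fun s => (A s *ᵥ u s) ⬝ᵥ v s)
      ((A' *ᵥ u t) ⬝ᵥ v t + (A t *ᵥ u') ⬝ᵥ v t + (A t *ᵥ u t) ⬝ᵥ v') t := by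
  have hAu : ∀ i, HasDerivAt (fun s => (A s *ᵥ u s) i) ((A' *ᵥ u t) i + (A t *ᵥ u') i) t :=
    fun i => by
      simpa only [mulVec, dotProduct, ← Finset.sum_add_distrib] using
        HasDerivAt.fun_sum fun j _ => (hA i j).fun_mul (hu j)
  simpa only [dotProduct, ← Finset.sum_add_distrib, add_mul] using
    HasDerivAt.fun_sum fun i _ => (hAu i).fun_mul (hv i)

theorem mulVec_dotProduct_comm_of_transpose_eq_neg {R ι : Type*} [CommRing R] [Fintype ι]
    {A : Matrix ι ι R} (hA : Aᵀ = -A) (u v : ι → R) :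
    (A *ᵥ u) ⬝ᵥ v = -((A *ᵥ v) ⬝ᵥ u) := by
  rw [dotProduct_comm, dotProduct_mulVec, ← mulVec_transpose, hA, neg_mulVec, neg_dotProduct]

theorem DifferentiableAt.comp_prodMk_left {E : Type*} [NormedAddCommGroup E] [NormedSpace ℝ E]
    {f : ℝ × ℝ → E} {x t : ℝ} (hf : DifferentiableAt ℝ f (x, t)) :
    DifferentiableAt ℝ (fun s => f (s, t)) x :=
  hf.comp x (differentiableAt_id.prodMk (differentiableAt_const t))

theorem DifferentiableAt.comp_prodMk_right {E : Type*} [NormedAddCommGroup E] [NormedSpace ℝ E]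
    {f : ℝ × ℝ → E} {x t : ℝ} (hf : DifferentiableAt ℝ f (x, t)) :
    DifferentiableAt ℝ (fun s => f (x, s)) t :=
  hf.comp t ((differentiableAt_const x).prodMk differentiableAt_id)

theorem multisymplectic_dissipation_pointwise {R ι : Type*} [CommRing R] [Fintype ι]
    {M K C Mt Kx : Matrix ι ι R} {u ut ux v vt vx : ι → R}
    (hM : Mᵀ = -M) (hK : Kᵀ = -K) (hC : Cᵀ - C = Mt + Kx)
    (hu : M *ᵥ ut + K *ᵥ ux = C *ᵥ u) (hv : M *ᵥ vt + K *ᵥ vx = C *ᵥ v) :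
    (Mt *ᵥ u) ⬝ᵥ v + (M *ᵥ ut) ⬝ᵥ v + (M *ᵥ u) ⬝ᵥ vt
      + ((Kx *ᵥ u) ⬝ᵥ v + (K *ᵥ ux) ⬝ᵥ v + (K *ᵥ u) ⬝ᵥ vx) = 0 := by
  have hCu : (C *ᵥ u) ⬝ᵥ v = (M *ᵥ ut) ⬝ᵥ v + (K *ᵥ ux) ⬝ᵥ v := by
    rw [← hu, add_dotProduct]
  have hCv : (Cᵀ *ᵥ u) ⬝ᵥ v = -((M *ᵥ u) ⬝ᵥ vt + (K *ᵥ u) ⬝ᵥ vx) := by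
    rw [mulVec_dotProduct_comm_of_transpose_eq_neg hM,
      mulVec_dotProduct_comm_of_transpose_eq_neg hK, ← neg_add, neg_neg, ← add_dotProduct, hv,
      dotProduct_comm, dotProduct_mulVec, vecMul_transpose]
  have hMK : (Mt *ᵥ u) ⬝ᵥ v + (Kx *ᵥ u) ⬝ᵥ v = (Cᵀ *ᵥ u) ⬝ᵥ v - (C *ᵥ u) ⬝ᵥ v := by
    rw [← add_dotProduct, ← add_mulVec, ← hC, sub_mulVec, sub_dotProduct]
  linear_combination hMK - hCu + hCv

theorem multisymplectic_dissipation_law_general (n : ℕ)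
    (M K C : ℝ → ℝ → Matrix (Fin n) (Fin n) ℝ)
    (hM : ∀ μ ν : Fin n, ContDiff ℝ 1 (fun P : ℝ × ℝ => M P.1 P.2 μ ν))
    (hK : ∀ μ ν : Fin n, ContDiff ℝ 1 (fun P : ℝ × ℝ => K P.1 P.2 μ ν))
    (skewM : ∀ x t : ℝ, (M x t)ᵀ = -(M x t))
    (skewK : ∀ x t : ℝ, (K x t)ᵀ = -(K x t))
    (hC : ∀ (x t : ℝ) (μ ν : Fin n),
      (C x t)ᵀ μ ν - C x t μ ν =
        deriv (fun s => M x s μ ν) t + deriv (fun s => K s t μ ν) x)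
    (U V : ℝ × ℝ → Fin n → ℝ)
    (hU : Differentiable ℝ U) (hV : Differentiable ℝ V)
    (hUeq : ∀ x t : ℝ,
      M x t *ᵥ (fun μ => deriv (fun s => U (x, s) μ) t)
        + K x t *ᵥ (fun μ => deriv (fun s => U (s, t) μ) x) = C x t *ᵥ U (x, t))
    (hVeq : ∀ x t : ℝ,
      M x t *ᵥ (fun μ => deriv (fun s => V (x, s) μ) t)
        + K x t *ᵥ (fun μ => deriv (fun s => V (s, t) μ) x) = C x t *ᵥ V (x, t)) :
    ∀ x t : ℝ,
      deriv (fun s => (M x s *ᵥ U (x, s)) ⬝ᵥ V (x, s)) t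
        + deriv (fun s => (K s t *ᵥ U (s, t)) ⬝ᵥ V (s, t)) x = 0 := by
  intro x t
  have hMt : ∀ μ ν, DifferentiableAt ℝ (fun s => M x s μ ν) t := fun μ ν =>
    ((hM μ ν).differentiable one_ne_zero (x, t)).comp_prodMk_right
  have hKx : ∀ μ ν, DifferentiableAt ℝ (fun s => K s t μ ν) x := fun μ ν =>
    ((hK μ ν).differentiable one_ne_zero (x, t)).comp_prodMk_left
  have hUt := differentiableAt_pi.mp (hU (x, t)).comp_prodMk_right
  have hUx := differentiableAt_pi.mp (hU (x, t)).comp_prodMk_left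
  have hVt := differentiableAt_pi.mp (hV (x, t)).comp_prodMk_right
  have hVx := differentiableAt_pi.mp (hV (x, t)).comp_prodMk_left
  rw [(HasDerivAt.mulVec_dotProduct (fun μ ν => (hMt μ ν).hasDerivAt)
      (fun μ => (hUt μ).hasDerivAt) (fun μ => (hVt μ).hasDerivAt)).deriv,
    (HasDerivAt.mulVec_dotProduct (fun μ ν => (hKx μ ν).hasDerivAt)
      (fun μ => (hUx μ).hasDerivAt) (fun μ => (hVx μ).hasDerivAt)).deriv]
  exact multisymplectic_dissipation_pointwise (skewM x t) (skewK x t)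
    (Matrix.ext (hC x t)) (hUeq x t) (hVeq x t)

/-- Let `M K : ℝ² → ℝ^{n×n}` be `C¹` skew-symmetric matrix
fields (arguments `(x,t)`), and let `C : ℝ² → ℝ^{n×n}` satisfy
`Cᵀ − C = ∂M/∂t + ∂K/∂x`. If `U V : ℝ² → ℝⁿ` are differentiable and satisfy
`M U_t + K U_x = C U` and `M V_t + K V_x = C V` everywhere, then the
multi-symplectic dissipation law `∂_t ⟨M U, V⟩ + ∂_x ⟨K U, V⟩ = 0` holds
everywhere. -/
theorem multisymplectic_dissipation_law (n : ℕ) (hn : 1 ≤ n)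
    (M K C : ℝ → ℝ → Matrix (Fin n) (Fin n) ℝ)
    (hM : ∀ μ ν : Fin n, ContDiff ℝ 1 (fun P : ℝ × ℝ => M P.1 P.2 μ ν))
    (hK : ∀ μ ν : Fin n, ContDiff ℝ 1 (fun P : ℝ × ℝ => K P.1 P.2 μ ν))
    (skewM : ∀ x t : ℝ, (M x t)ᵀ = -(M x t))
    (skewK : ∀ x t : ℝ, (K x t)ᵀ = -(K x t))
    (hC : ∀ (x t : ℝ) (μ ν : Fin n),
      (C x t)ᵀ μ ν - C x t μ ν =
        deriv (fun s => M x s μ ν) t + deriv (fun s => K s t μ ν) x)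
    (U V : ℝ × ℝ → Fin n → ℝ)
    (hU : Differentiable ℝ U) (hV : Differentiable ℝ V)
    (hUeq : ∀ x t : ℝ,
      M x t *ᵥ (fun μ => deriv (fun s => U (x, s) μ) t)
        + K x t *ᵥ (fun μ => deriv (fun s => U (s, t) μ) x) = C x t *ᵥ U (x, t))
    (hVeq : ∀ x t : ℝ,
      M x t *ᵥ (fun μ => deriv (fun s => V (x, s) μ) t)
        + K x t *ᵥ (fun μ => deriv (fun s => V (s, t) μ) x) = C x t *ᵥ V (x, t)) :
    ∀ x t : ℝ,
      deriv (fun s => (M x s *ᵥ U (x, s)) ⬝ᵥ V (x, s)) t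
        + deriv (fun s => (K s t *ᵥ U (s, t)) ⬝ᵥ V (s, t)) x = 0 :=
  multisymplectic_dissipation_law_general n M K C hM hK skewM skewK hC U V hU hV hUeq hVeq
end

section
/- Let α, β ∈ ℝ. Let (u₁,p₁,q₁) and (u₂,p₂,q₂) be two differentiable triples of functions ℝ × ℝ → ℝ (arguments (x,t)), each satisfying the damped string system with parameters α, β: u_t = p, u_x = q, p_t − q_x + u + α p + β q = 0 at every point. Then the exponentially weighted symplectic density is exactly conserved: at every point of ℝ², ∂/∂t [e^{αt − βx} (p₁ u₂ − u₁ p₂)] + ∂/∂x [e^{αt − βx} (u₁ q₂ − q₁ u₂)] = 0. -/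
/-!
Along a solution the product rule and `u_t = p`, `u_x = q` reduce `∂_t ω + ∂_x κ` to
`u₂ (p₁_t − q₁_x) − u₁ (p₂_t − q₂_x)`, and the third equation turns this into the
dissipation law `∂_t ω + ∂_x κ = −α ω + β κ`. The weight `w = e^{αt − βx}` satisfies
`w_t = α w` and `w_x = −β w`, which cancels exactly the right-hand side.
-/

open Real

section Slices

variable {𝕜 F : Type*} [NontriviallyNormedField 𝕜] [NormedAddCommGroup F] [NormedSpace 𝕜 F]
  {f : 𝕜 × 𝕜 → F} {x t : 𝕜}

theorem DifferentiableAt.hasDerivAt_slice_snd (hf : DifferentiableAt 𝕜 f (x, t)) :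
    HasDerivAt (fun s => f (x, s)) (deriv (fun s => f (x, s)) t) t :=
  (hf.comp t (differentiableAt_const x |>.prodMk differentiableAt_id)).hasDerivAt

theorem DifferentiableAt.hasDerivAt_slice_fst (hf : DifferentiableAt 𝕜 f (x, t)) :
    HasDerivAt (fun s => f (s, t)) (deriv (fun s => f (s, t)) x) x :=
  (hf.comp x (differentiableAt_id.prodMk (differentiableAt_const t))).hasDerivAt

end Slices

def DampedStringAt (α β : ℝ) (u p q : ℝ × ℝ → ℝ) (x t : ℝ) : Prop :=
  deriv (fun s => u (x, s)) t = p (x, t) ∧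
  deriv (fun s => u (s, t)) x = q (x, t) ∧
  deriv (fun s => p (x, s)) t - deriv (fun s => q (s, t)) x
    + u (x, t) + α * p (x, t) + β * q (x, t) = 0

namespace DampedStringAt

variable {α β x t : ℝ} {u₁ p₁ q₁ u₂ p₂ q₂ : ℝ × ℝ → ℝ}

theorem hasDerivAt_omega (h₁ : DampedStringAt α β u₁ p₁ q₁ x t)
    (h₂ : DampedStringAt α β u₂ p₂ q₂ x t)
    (hu₁ : DifferentiableAt ℝ u₁ (x, t)) (hp₁ : DifferentiableAt ℝ p₁ (x, t))
    (hu₂ : DifferentiableAt ℝ u₂ (x, t)) (hp₂ : DifferentiableAt ℝ p₂ (x, t)) :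
    HasDerivAt (fun s => p₁ (x, s) * u₂ (x, s) - u₁ (x, s) * p₂ (x, s))
      (deriv (fun s => p₁ (x, s)) t * u₂ (x, t)
        - u₁ (x, t) * deriv (fun s => p₂ (x, s)) t) t := by
  refine ((hp₁.hasDerivAt_slice_snd.mul hu₂.hasDerivAt_slice_snd).sub
    (hu₁.hasDerivAt_slice_snd.mul hp₂.hasDerivAt_slice_snd)).congr_deriv ?_
  rw [h₁.1, h₂.1]
  ring

theorem hasDerivAt_kappa (h₁ : DampedStringAt α β u₁ p₁ q₁ x t)
    (h₂ : DampedStringAt α β u₂ p₂ q₂ x t)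
    (hu₁ : DifferentiableAt ℝ u₁ (x, t)) (hq₁ : DifferentiableAt ℝ q₁ (x, t))
    (hu₂ : DifferentiableAt ℝ u₂ (x, t)) (hq₂ : DifferentiableAt ℝ q₂ (x, t)) :
    HasDerivAt (fun s => u₁ (s, t) * q₂ (s, t) - q₁ (s, t) * u₂ (s, t))
      (u₁ (x, t) * deriv (fun s => q₂ (s, t)) x
        - deriv (fun s => q₁ (s, t)) x * u₂ (x, t)) x := by
  refine ((hu₁.hasDerivAt_slice_fst.mul hq₂.hasDerivAt_slice_fst).sub
    (hq₁.hasDerivAt_slice_fst.mul hu₂.hasDerivAt_slice_fst)).congr_deriv ?_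
  rw [h₁.2.1, h₂.2.1]
  ring

theorem symplectic_dissipation (h₁ : DampedStringAt α β u₁ p₁ q₁ x t)
    (h₂ : DampedStringAt α β u₂ p₂ q₂ x t)
    (hu₁ : DifferentiableAt ℝ u₁ (x, t)) (hp₁ : DifferentiableAt ℝ p₁ (x, t))
    (hq₁ : DifferentiableAt ℝ q₁ (x, t))
    (hu₂ : DifferentiableAt ℝ u₂ (x, t)) (hp₂ : DifferentiableAt ℝ p₂ (x, t))
    (hq₂ : DifferentiableAt ℝ q₂ (x, t)) :
    deriv (fun s => p₁ (x, s) * u₂ (x, s) - u₁ (x, s) * p₂ (x, s)) t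
      + deriv (fun s => u₁ (s, t) * q₂ (s, t) - q₁ (s, t) * u₂ (s, t)) x
      = -α * (p₁ (x, t) * u₂ (x, t) - u₁ (x, t) * p₂ (x, t))
        + β * (u₁ (x, t) * q₂ (x, t) - q₁ (x, t) * u₂ (x, t)) := by
  rw [(hasDerivAt_omega h₁ h₂ hu₁ hp₁ hu₂ hp₂).deriv,
    (hasDerivAt_kappa h₁ h₂ hu₁ hq₁ hu₂ hq₂).deriv]
  linear_combination u₂ (x, t) * h₁.2.2 - u₁ (x, t) * h₂.2.2

end DampedStringAt

theorem deriv_weighted_add_deriv_weighted_eq_zero {α β x t : ℝ} {ω κ : ℝ × ℝ → ℝ}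
    (hω : DifferentiableAt ℝ (fun s => ω (x, s)) t)
    (hκ : DifferentiableAt ℝ (fun s => κ (s, t)) x)
    (hdiss : deriv (fun s => ω (x, s)) t + deriv (fun s => κ (s, t)) x
      = -α * ω (x, t) + β * κ (x, t)) :
    deriv (fun s => exp (α * s - β * x) * ω (x, s)) t
      + deriv (fun s => exp (α * t - β * s) * κ (s, t)) x = 0 := by
  have hwt : HasDerivAt (fun s => exp (α * s - β * x)) (exp (α * t - β * x) * α) t := by
    simpa using (((hasDerivAt_id t).const_mul α).sub_const (β * x)).exp
  have hwx : HasDerivAt (fun s => exp (α * t - β * s)) (exp (α * t - β * x) * -β) x := by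
    simpa using (((hasDerivAt_id x).const_mul β).const_sub (α * t)).exp
  rw [deriv_fun_mul hwt.differentiableAt hω, deriv_fun_mul hwx.differentiableAt hκ,
    hwt.deriv, hwx.deriv]
  linear_combination exp (α * t - β * x) * hdiss

/-- For two differentiable solutions `(u₁,p₁,q₁)` and
`(u₂,p₂,q₂)` of the damped string system `u_t = p`, `u_x = q`,
`p_t − q_x + u + α p + β q = 0`, the exponentially weighted symplectic density
is exactly conserved:
`∂_t [e^{αt−βx}(p₁u₂ − u₁p₂)] + ∂_x [e^{αt−βx}(u₁q₂ − q₁u₂)] = 0`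
at every point. -/
theorem damped_string_weighted_symplectic_conservation
    (α β : ℝ) (u₁ p₁ q₁ u₂ p₂ q₂ : ℝ × ℝ → ℝ)
    (hu₁ : Differentiable ℝ u₁) (hp₁ : Differentiable ℝ p₁)
    (hq₁ : Differentiable ℝ q₁)
    (hu₂ : Differentiable ℝ u₂) (hp₂ : Differentiable ℝ p₂)
    (hq₂ : Differentiable ℝ q₂)
    (h₁ : ∀ x t : ℝ,
      deriv (fun s => u₁ (x, s)) t = p₁ (x, t) ∧
      deriv (fun s => u₁ (s, t)) x = q₁ (x, t) ∧
      deriv (fun s => p₁ (x, s)) t - deriv (fun s => q₁ (s, t)) x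
        + u₁ (x, t) + α * p₁ (x, t) + β * q₁ (x, t) = 0)
    (h₂ : ∀ x t : ℝ,
      deriv (fun s => u₂ (x, s)) t = p₂ (x, t) ∧
      deriv (fun s => u₂ (s, t)) x = q₂ (x, t) ∧
      deriv (fun s => p₂ (x, s)) t - deriv (fun s => q₂ (s, t)) x
        + u₂ (x, t) + α * p₂ (x, t) + β * q₂ (x, t) = 0) :
    ∀ x t : ℝ,
      deriv (fun s =>
          exp (α * s - β * x) *
            (p₁ (x, s) * u₂ (x, s) - u₁ (x, s) * p₂ (x, s))) t
        + deriv (fun s =>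
          exp (α * t - β * s) *
            (u₁ (s, t) * q₂ (s, t) - q₁ (s, t) * u₂ (s, t))) x = 0 := by
  intro x t
  have hsol₁ : DampedStringAt α β u₁ p₁ q₁ x t := h₁ x t
  have hsol₂ : DampedStringAt α β u₂ p₂ q₂ x t := h₂ x t
  exact deriv_weighted_add_deriv_weighted_eq_zero
    (ω := fun z => p₁ z * u₂ z - u₁ z * p₂ z) (κ := fun z => u₁ z * q₂ z - q₁ z * u₂ z)
    (hsol₁.hasDerivAt_omega hsol₂ (hu₁ _) (hp₁ _) (hu₂ _) (hp₂ _)).differentiableAt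
    (hsol₁.hasDerivAt_kappa hsol₂ (hu₁ _) (hq₁ _) (hu₂ _) (hq₂ _)).differentiableAt
    (hsol₁.symplectic_dissipation hsol₂ (hu₁ _) (hp₁ _) (hq₁ _)
      (hu₂ _) (hp₂ _) (hq₂ _))
end

section
/- Let n ≥ 1, δt > 0, δx > 0, let M, K ∈ ℝ^{n×n} be constant skew-symmetric matrices, and let A : ℤ × ℤ → ℝ^{n×n} assign to each cell (i,j) a symmetric matrix A_{i,j}. Suppose the grid functions U, V : ℤ × ℤ → ℝⁿ both satisfy the box (Preissman) scheme: for all (i,j), M (W_{i,j+1} + W_{i+1,j+1} − W_{i,j} − W_{i+1,j})/(2 δt) + K (W_{i+1,j} + W_{i+1,j+1} − W_{i,j} − W_{i,j+1})/(2 δx) = A_{i,j} (W_{i,j} + W_{i+1,j} + W_{i,j+1} + W_{i+1,j+1})/4, with W = U and W = V. Define ω_{i,j} = ⟨M (U_{i,j} + U_{i+1,j})/2, (V_{i,j} + V_{i+1,j})/2⟩ and κ_{i,j} = ⟨K (U_{i,j} + U_{i,j+1})/2, (V_{i,j} + V_{i,j+1})/2⟩. Then the discrete conservation law of symplecticity holds: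 for all (i,j), (ω_{i,j+1} − ω_{i,j})/δt + (κ_{i+1,j} − κ_{i,j})/δx = 0. -/
open Matrix

private lemma skew_flip' {n : ℕ} (B : Matrix (Fin n) (Fin n) ℝ) (hB : Bᵀ = -B)
    (x y : Fin n → ℝ) : (B *ᵥ x) ⬝ᵥ y = -((B *ᵥ y) ⬝ᵥ x) := by
  calc (B *ᵥ x) ⬝ᵥ y = y ⬝ᵥ (B *ᵥ x) := dotProduct_comm _ _
    _ = (y ᵥ* B) ⬝ᵥ x := dotProduct_mulVec _ _ _
    _ = (Bᵀ *ᵥ y) ⬝ᵥ x := by rw [mulVec_transpose]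
    _ = -((B *ᵥ y) ⬝ᵥ x) := by rw [hB, neg_mulVec, neg_dotProduct]

private lemma symm_flip' {n : ℕ} (B : Matrix (Fin n) (Fin n) ℝ) (hB : Bᵀ = B)
    (x y : Fin n → ℝ) : (B *ᵥ x) ⬝ᵥ y = (B *ᵥ y) ⬝ᵥ x := by
  calc (B *ᵥ x) ⬝ᵥ y = y ⬝ᵥ (B *ᵥ x) := dotProduct_comm _ _
    _ = (y ᵥ* B) ⬝ᵥ x := dotProduct_mulVec _ _ _
    _ = (Bᵀ *ᵥ y) ⬝ᵥ x := by rw [mulVec_transpose]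
    _ = (B *ᵥ y) ⬝ᵥ x := by rw [hB]


open Matrix

/-- (Discrete conservation of symplecticity for the box
scheme.) Let `M K ∈ ℝ^{n×n}` be constant skew-symmetric matrices and let
`A_{i,j}` be symmetric matrices. If the grid functions `U V : ℤ × ℤ → ℝⁿ` both
satisfy the box (Preissman) scheme
`M (W_{i,j+1}+W_{i+1,j+1}−W_{i,j}−W_{i+1,j})/(2δt)
  + K (W_{i+1,j}+W_{i+1,j+1}−W_{i,j}−W_{i,j+1})/(2δx)
  = A_{i,j} (W_{i,j}+W_{i+1,j}+W_{i,j+1}+W_{i+1,j+1})/4`,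
then with `ω_{i,j} = ⟨M (U_{i,j}+U_{i+1,j})/2, (V_{i,j}+V_{i+1,j})/2⟩` and
`κ_{i,j} = ⟨K (U_{i,j}+U_{i,j+1})/2, (V_{i,j}+V_{i,j+1})/2⟩`, the discrete
conservation law `(ω_{i,j+1} − ω_{i,j})/δt + (κ_{i+1,j} − κ_{i,j})/δx = 0`
holds for all `(i,j)`. -/
theorem box_scheme_discrete_symplecticity
    (n : ℕ) (hn : 1 ≤ n) (δt δx : ℝ) (hδt : 0 < δt) (hδx : 0 < δx)
    (M K : Matrix (Fin n) (Fin n) ℝ) (hM : Mᵀ = -M) (hK : Kᵀ = -K)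
    (A : ℤ × ℤ → Matrix (Fin n) (Fin n) ℝ) (hA : ∀ c, (A c)ᵀ = A c)
    (U V : ℤ × ℤ → Fin n → ℝ)
    (hU : ∀ i j : ℤ,
      M *ᵥ ((1 / (2 * δt)) •
          (U (i, j + 1) + U (i + 1, j + 1) - U (i, j) - U (i + 1, j)))
        + K *ᵥ ((1 / (2 * δx)) •
          (U (i + 1, j) + U (i + 1, j + 1) - U (i, j) - U (i, j + 1))) =
      A (i, j) *ᵥ ((1 / 4 : ℝ) •
          (U (i, j) + U (i + 1, j) + U (i, j + 1) + U (i + 1, j + 1))))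
    (hV : ∀ i j : ℤ,
      M *ᵥ ((1 / (2 * δt)) •
          (V (i, j + 1) + V (i + 1, j + 1) - V (i, j) - V (i + 1, j)))
        + K *ᵥ ((1 / (2 * δx)) •
          (V (i + 1, j) + V (i + 1, j + 1) - V (i, j) - V (i, j + 1))) =
      A (i, j) *ᵥ ((1 / 4 : ℝ) •
          (V (i, j) + V (i + 1, j) + V (i, j + 1) + V (i + 1, j + 1)))) :
    let ω : ℤ → ℤ → ℝ := fun i j =>
      (M *ᵥ ((1 / 2 : ℝ) • (U (i, j) + U (i + 1, j)))) ⬝ᵥ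
        ((1 / 2 : ℝ) • (V (i, j) + V (i + 1, j)))
    let κ : ℤ → ℤ → ℝ := fun i j =>
      (K *ᵥ ((1 / 2 : ℝ) • (U (i, j) + U (i, j + 1)))) ⬝ᵥ
        ((1 / 2 : ℝ) • (V (i, j) + V (i, j + 1)))
    ∀ i j : ℤ, (ω i (j + 1) - ω i j) / δt + (κ (i + 1) j - κ i j) / δx = 0 := by
  intro ω κ i j
  have flipM : ∀ p q : ℤ × ℤ, (M *ᵥ V p) ⬝ᵥ U q = -((M *ᵥ U q) ⬝ᵥ V p) :=
    fun p q => skew_flip' M hM _ _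
  have flipK : ∀ p q : ℤ × ℤ, (K *ᵥ V p) ⬝ᵥ U q = -((K *ᵥ U q) ⬝ᵥ V p) :=
    fun p q => skew_flip' K hK _ _
  have flipA : ∀ p q : ℤ × ℤ,
      (A (i, j) *ᵥ V p) ⬝ᵥ U q = (A (i, j) *ᵥ U q) ⬝ᵥ V p :=
    fun p q => symm_flip' _ (hA (i, j)) _ _
  have h1 := congrArg
    (fun w => w ⬝ᵥ (V (i, j) + V (i + 1, j) + V (i, j + 1) + V (i + 1, j + 1)))
    (hU i j)
  have h2 := congrArg
    (fun w => w ⬝ᵥ (U (i, j) + U (i + 1, j) + U (i, j + 1) + U (i + 1, j + 1)))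
    (hV i j)
  simp only [ω, κ, mulVec_smul, mulVec_add, mulVec_sub, add_dotProduct,
    sub_dotProduct, smul_dotProduct, dotProduct_add, dotProduct_sub,
    dotProduct_smul, neg_dotProduct, dotProduct_neg, smul_eq_mul,
    flipM, flipK, flipA] at h1 h2 ⊢
  have ht := hδt.ne'
  have hx := hδx.ne'
  field_simp at h1 h2 ⊢
  linarith [h1, h2]
end

section
/- Let δt > 0, δx > 0, and set σ = e^{δt/2}. For a grid function f : ℤ × ℤ → ℝ and a cell (i,j), write f̂_j = (f_{i,j} + f_{i+1,j})/2 and f̂_{j+1} = (f_{i,j+1} + f_{i+1,j+1})/2 (spatial averages), f̃_i = (σ f_{i,j+1} + σ^{-1} f_{i,j})/2 and f̃_{i+1} = (σ f_{i+1,j+1} + σ^{-1} f_{i+1,j})/2 (weighted temporal averages), and f̄ = [σ (f_{i,j+1} + f_{i+1,j+1}) + σ^{-1} (f_{i,j} + f_{i+1,j})]/4 (weighted center average). Suppose two grid triples (u,p,q) and (u',p',q') of functions ℤ × ℤ → ℝ each satisfy, for every cell (i,j), the exponentially weighted box scheme for the damped string equation u_tt − u_xx + u + 2u_t = 0: (i)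 (σ p̂_{j+1} − σ^{-1} p̂_j)/δt − (q̃_{i+1} − q̃_i)/δx = −ū − p̄; (ii) (σ û_{j+1} − σ^{-1} û_j)/δt = p̄ + ū; (iii) (ũ_{i+1} − ũ_i)/δx = q̄. Then for every cell (i,j) the discrete multi-symplectic dissipation law holds: [e^{δt} (p̂_{j+1} û'_{j+1} − û_{j+1} p̂'_{j+1}) − e^{−δt} (p̂_j û'_j − û_j p̂'_j)]/δt + [(ũ_{i+1} q̃'_{i+1} − q̃_{i+1} ũ'_{i+1}) − (ũ_i q̃'_i − q̃_i ũ'_i)]/δx = 0, where primed averages are formed from (u',p',q') in the same way. -/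
open Real

/-- Spatial average of a grid function at time level `j`:
`f̂_j = (f_{i,j} + f_{i+1,j})/2`. -/
noncomputable def hatAvg (f : ℤ × ℤ → ℝ) (i j : ℤ) : ℝ := (f (i, j) + f (i + 1, j)) / 2

/-- Weighted temporal average of a grid function at column `i` over the cell
with lower time level `j`: `f̃_i = (σ f_{i,j+1} + σ⁻¹ f_{i,j})/2`. -/
noncomputable def tildeAvg (σ : ℝ) (f : ℤ × ℤ → ℝ) (i j : ℤ) : ℝ :=
  (σ * f (i, j + 1) + σ⁻¹ * f (i, j)) / 2

/-- Weighted center average of a grid function over the cell `(i,j)`: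
`f̄ = [σ(f_{i,j+1} + f_{i+1,j+1}) + σ⁻¹(f_{i,j} + f_{i+1,j})]/4`. -/
noncomputable def barAvg (σ : ℝ) (f : ℤ × ℤ → ℝ) (i j : ℤ) : ℝ :=
  (σ * (f (i, j + 1) + f (i + 1, j + 1)) + σ⁻¹ * (f (i, j) + f (i + 1, j))) / 4

/-- (Discrete multi-symplectic dissipation law for the
exponentially weighted box scheme.) With `σ = e^{δt/2}`, if the grid triples
`(u,p,q)` and `(u',p',q')` both satisfy the exponentially weighted box scheme
for the damped string equation `u_tt − u_xx + u + 2u_t = 0`: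
(i) `(σ p̂_{j+1} − σ⁻¹ p̂_j)/δt − (q̃_{i+1} − q̃_i)/δx = −ū − p̄`;
(ii) `(σ û_{j+1} − σ⁻¹ û_j)/δt = p̄ + ū`;
(iii) `(ũ_{i+1} − ũ_i)/δx = q̄`;
then at every cell `(i,j)` the discrete multi-symplectic dissipation law holds:
`[e^{δt}(p̂_{j+1} û'_{j+1} − û_{j+1} p̂'_{j+1}) − e^{−δt}(p̂_j û'_j − û_j p̂'_j)]/δt
 + [(ũ_{i+1} q̃'_{i+1} − q̃_{i+1} ũ'_{i+1}) − (ũ_i q̃'_i − q̃_i ũ'_i)]/δx = 0`. -/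
theorem weighted_box_scheme_discrete_dissipation
    (δt δx : ℝ) (hδt : 0 < δt) (hδx : 0 < δx)
    (u p q u' p' q' : ℤ × ℤ → ℝ) :
    let σ : ℝ := exp (δt / 2)
    (∀ i j : ℤ,
      (σ * hatAvg p i (j + 1) - σ⁻¹ * hatAvg p i j) / δt
          - (tildeAvg σ q (i + 1) j - tildeAvg σ q i j) / δx =
        -barAvg σ u i j - barAvg σ p i j) →
    (∀ i j : ℤ,
      (σ * hatAvg u i (j + 1) - σ⁻¹ * hatAvg u i j) / δt =
        barAvg σ p i j + barAvg σ u i j) →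
    (∀ i j : ℤ,
      (tildeAvg σ u (i + 1) j - tildeAvg σ u i j) / δx = barAvg σ q i j) →
    (∀ i j : ℤ,
      (σ * hatAvg p' i (j + 1) - σ⁻¹ * hatAvg p' i j) / δt
          - (tildeAvg σ q' (i + 1) j - tildeAvg σ q' i j) / δx =
        -barAvg σ u' i j - barAvg σ p' i j) →
    (∀ i j : ℤ,
      (σ * hatAvg u' i (j + 1) - σ⁻¹ * hatAvg u' i j) / δt =
        barAvg σ p' i j + barAvg σ u' i j) →
    (∀ i j : ℤ,
      (tildeAvg σ u' (i + 1) j - tildeAvg σ u' i j) / δx = barAvg σ q' i j) →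
    ∀ i j : ℤ,
      (exp δt * (hatAvg p i (j + 1) * hatAvg u' i (j + 1)
            - hatAvg u i (j + 1) * hatAvg p' i (j + 1))
          - exp (-δt) * (hatAvg p i j * hatAvg u' i j
            - hatAvg u i j * hatAvg p' i j)) / δt
        + ((tildeAvg σ u (i + 1) j * tildeAvg σ q' (i + 1) j
            - tildeAvg σ q (i + 1) j * tildeAvg σ u' (i + 1) j)
          - (tildeAvg σ u i j * tildeAvg σ q' i j
            - tildeAvg σ q i j * tildeAvg σ u' i j)) / δx = 0 := by
  intro σ h1 h2 h3 h4 h5 h6 i j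
  have hexp : exp δt = σ * σ := by
    rw [← Real.exp_add]; ring_nf
  have hexpneg : exp (-δt) = σ⁻¹ * σ⁻¹ := by
    rw [← Real.exp_neg, ← Real.exp_add]; ring_nf
  have e1 := h1 i j
  have e2 := h2 i j
  have e3 := h3 i j
  have e4 := h4 i j
  have e5 := h5 i j
  have e6 := h6 i j
  simp only [hatAvg, tildeAvg, barAvg] at e1 e2 e3 e4 e5 e6 ⊢
  rw [hexp, hexpneg]
  linear_combination ((σ * (u' (i, j + 1) + u' (i + 1, j + 1)) + σ⁻¹ * (u' (i, j) + u' (i + 1, j))) / 4) * e1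
    + ((σ * (p (i, j + 1) + p (i + 1, j + 1)) + σ⁻¹ * (p (i, j) + p (i + 1, j))) / 4) * e5
    - ((σ * (p' (i, j + 1) + p' (i + 1, j + 1)) + σ⁻¹ * (p' (i, j) + p' (i + 1, j))) / 4) * e2
    - ((σ * (u (i, j + 1) + u (i + 1, j + 1)) + σ⁻¹ * (u (i, j) + u (i + 1, j))) / 4) * e4
    + ((σ * (q' (i, j + 1) + q' (i + 1, j + 1)) + σ⁻¹ * (q' (i, j) + q' (i + 1, j))) / 4) * e3
    - ((σ * (q (i, j + 1) + q (i + 1, j + 1)) + σ⁻¹ * (q (i, j) + q (i + 1, j))) / 4) * e6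
end
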